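/- With τ₀ = 0.32: for all ρ ∈ [0, 1] and all s ∈ [0, 1.301], one has I(circPerim0(ρπ/3 + 2s), 5, τ₀ − s, ρ) > 0, i.e., √(4π·a − a²) − (0.32 − s)·B' − ρ·p₅ > 0 where a = ρπ/3 + 2s. (Note a ≤ π/3 + 2.602 < 2π, so the formula for circPerim0 is in its valid monotone range.) -/

import Mathlib

open Real

/-- Perimeter of a regular spherical `n`-gon of area `x` on the unit sphere. -/
noncomputable def regPerim (x n : ℝ) : ℝ :=
  n * Real.arccos ((Real.cos (2 * π / n) +
      (Real.cos ((π - (2 * π - x) / n) / 2)) ^ 2) /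
      (Real.sin ((π - (2 * π - x) / n) / 2)) ^ 2)

/-- Circumference of a circle on the unit sphere enclosing area `a`. -/
noncomputable def circPerim0 (a : ℝ) : ℝ := Real.sqrt (4 * π * a - a ^ 2)

/-- Perimeter of the regular spherical pentagon of area `π/3`. -/
noncomputable def p5 : ℝ := 5 * Real.arccos ((4 * Real.cos (2 * π / 5) + 1) / 3)

/-- Derivative at `n = 5` of `n ↦ regPerim (π/3) n`. -/
noncomputable def p5' : ℝ := deriv (fun n : ℝ => regPerim (π / 3) n) 5

/-- `B' = -∂₁ regPerim (π/3, 5)`. -/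
noncomputable def B' : ℝ := - deriv (fun x : ℝ => regPerim x 5) (π / 3)

/-- The isoperimetric functional `I(ℓ, n, t, ρ)`. -/
noncomputable def Ifun (ℓ n t ρ : ℝ) : ℝ := ℓ - t * B' + (5 - n) * p5' - ρ * p5

/-!
The two constants are explicit: `cos (2π/5) = (√5 - 1)/4` gives `p₅ = 5 arccos (√5/3) ≤ 3.7`, and
differentiating `regPerim` in the area through `d/db [(c + cos² b)/sin² b] = -2(1 + c) cos b / sin³ b`
gives `B' = -(3 + √5)√3/6 ≈ -1.5115`. With these bounds and `3.14 < π < 3.15`, the claim is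
`R < √(4πa - a²)` for a quantity `R` bounded by an affine function of `(ρ, s)`; when `R ≥ 0` we
square, and the resulting inequality between a convex quadratic and an affine function of `(ρ, s)`
holds on the parameter box.
-/

lemma cos_two_pi_div_five : cos (2 * π / 5) = (√5 - 1) / 4 := by
  rw [show 2 * π / 5 = 2 * (π / 5) by ring, cos_two_mul, cos_pi_div_five]
  nlinarith [Real.sq_sqrt (show (0 : ℝ) ≤ 5 by norm_num)]

lemma p5_eq : p5 = 5 * arccos (√5 / 3) := by
  rw [p5, cos_two_pi_div_five]
  ring_nf

lemma cos_lt_sqrt_five_div_three : cos 0.74 < √5 / 3 := by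
  have hcos := (abs_le.1 (cos_bound (x := 0.74) (by norm_num [abs_of_nonneg]))).2
  have hsqrt : (2.236 : ℝ) < √5 := (lt_sqrt (by norm_num)).2 (by norm_num)
  norm_num [abs_of_nonneg] at hcos
  linarith

lemma p5_le : p5 ≤ 3.7 := by
  have h : arccos (√5 / 3) ≤ 0.74 := by
    calc arccos (√5 / 3) ≤ arccos (cos 0.74) := arccos_le_arccos cos_lt_sqrt_five_div_three.le
      _ = 0.74 := arccos_cos (by norm_num) (by linarith [pi_gt_three])
  rw [p5_eq]
  linarith

lemma hasDerivAt_const_add_cos_sq_div_sin_sq (c : ℝ) {b : ℝ} (hb : sin b ≠ 0) :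
    HasDerivAt (fun b => (c + cos b ^ 2) / sin b ^ 2) (-2 * (1 + c) * cos b / sin b ^ 3) b := by
  refine ((((hasDerivAt_cos b).pow 2).const_add c).div ((hasDerivAt_sin b).pow 2)
    (pow_ne_zero 2 hb)).congr_deriv ?_
  simp only [Pi.pow_apply]
  field_simp
  norm_num
  linear_combination (-2 * sin b * cos b) * sin_sq_add_cos_sq b

/-- Half the interior angle `α / 2` of the regular spherical `n`-gon of area `x`. -/
noncomputable def regHalfAngle (x n : ℝ) : ℝ := (π - (2 * π - x) / n) / 2

/-- The cosine of the side length of the regular spherical `n`-gon of area `x`, by the spherical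
law of cosines for angles. -/
noncomputable def regSideCos (x n : ℝ) : ℝ :=
  (cos (2 * π / n) + cos (regHalfAngle x n) ^ 2) / sin (regHalfAngle x n) ^ 2

lemma hasDerivAt_regPerim_area {x n : ℝ} (hn : n ≠ 0) (hsin : sin (regHalfAngle x n) ≠ 0)
    (hq₁ : regSideCos x n ≠ -1) (hq₂ : regSideCos x n ≠ 1) :
    HasDerivAt (regPerim · n)
      ((1 + cos (2 * π / n)) * cos (regHalfAngle x n) /
        (sin (regHalfAngle x n) ^ 3 * √(1 - regSideCos x n ^ 2))) x := by
  have hangle : HasDerivAt (regHalfAngle · n) (1 / (2 * n)) x := by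
    refine ((((hasDerivAt_id x).const_sub (2 * π)).div_const n).const_sub π |>.div_const 2)
      |>.congr_deriv ?_
    field_simp
  have hcos := (hasDerivAt_const_add_cos_sq_div_sin_sq (cos (2 * π / n)) hsin).comp x hangle
  have hperim := ((hasDerivAt_arccos hq₁ hq₂).comp x hcos).const_mul n
  refine hperim.congr_deriv ?_
  field_simp

lemma regHalfAngle_pi_div_three_five : regHalfAngle (π / 3) 5 = π / 3 := by
  rw [regHalfAngle]; ring

lemma regSideCos_pi_div_three_five : regSideCos (π / 3) 5 = √5 / 3 := by
  rw [regSideCos, regHalfAngle_pi_div_three_five, cos_two_pi_div_five, cos_pi_div_three,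
    sin_pi_div_three]
  field_simp
  linear_combination (-4 * √5) * sq_sqrt (show (0 : ℝ) ≤ 3 by norm_num)

lemma B'_eq : B' = -((3 + √5) * √3 / 6) := by
  have h5 : √5 ^ 2 = 5 := sq_sqrt (by norm_num)
  have h3 : √3 ^ 2 = 3 := sq_sqrt (by norm_num)
  have hq : regSideCos (π / 3) 5 = √5 / 3 := regSideCos_pi_div_three_five
  have hroot : √(1 - (√5 / 3) ^ 2) = 2 / 3 := by
    rw [sqrt_eq_iff_mul_self_eq] <;> nlinarith
  have hderiv := hasDerivAt_regPerim_area (x := π / 3) (n := 5) (by norm_num)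
    (by rw [regHalfAngle_pi_div_three_five, sin_pi_div_three]; positivity)
    (by rw [hq]; nlinarith) (by rw [hq]; nlinarith)
  rw [B', hderiv.deriv, hq, hroot, regHalfAngle_pi_div_three_five, cos_two_pi_div_five,
    cos_pi_div_three, sin_pi_div_three]
  field_simp
  linear_combination (4 * (3 + √5) * (√3 ^ 2 + 3)) * h3

lemma neg_B'_mem_Icc : -B' ∈ Set.Icc 1.51 1.52 := by
  have h5l : (2.236 : ℝ) < √5 := (lt_sqrt (by norm_num)).2 (by norm_num)
  have h5u : √5 < 2.237 := (sqrt_lt' (by norm_num)).2 (by norm_num)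
  have h3l : (1.732 : ℝ) < √3 := (lt_sqrt (by norm_num)).2 (by norm_num)
  have h3u : √3 < 1.733 := (sqrt_lt' (by norm_num)).2 (by norm_num)
  rw [B'_eq, neg_neg]
  constructor <;> nlinarith

/-- The left side minus the right side is convex in `(ρ, s)`, so it is enough that it is negative
at the vertices of the region. -/
lemma quadratic_lt_linear_on_box {ρ s : ℝ} (hρ₀ : 0 ≤ ρ) (hρ₁ : ρ ≤ 1) (hs₀ : 0 ≤ s)
    (hs₁ : s ≤ 1.301) (hU : 0 ≤ 3.7 * ρ + 1.52 * s - 0.4832) :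
    (3.7 * ρ + 1.52 * s - 0.4832) ^ 2 + (1.05 * ρ + 2 * s) ^ 2 < 12.56 * (1.046 * ρ + 2 * s) := by
  nlinarith [mul_nonneg hρ₀ hs₀, mul_nonneg (sub_nonneg.2 hρ₁) hs₀,
    mul_nonneg hρ₀ (sub_nonneg.2 hs₁), mul_nonneg (sub_nonneg.2 hρ₁) (sub_nonneg.2 hs₁),
    mul_nonneg hU hρ₀, mul_nonneg hU hs₀, mul_nonneg hU (sub_nonneg.2 hρ₁),
    mul_nonneg hU (sub_nonneg.2 hs₁)]

lemma lt_circPerim0 {ρ s p D : ℝ} (hρ₀ : 0 ≤ ρ) (hρ₁ : ρ ≤ 1) (hs₀ : 0 ≤ s) (hs₁ : s ≤ 1.301)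
    (hp : p ≤ 3.7) (hD : D ∈ Set.Icc 1.51 1.52) :
    ρ * p - (0.32 - s) * D < circPerim0 (ρ * π / 3 + 2 * s) := by
  obtain ⟨hD₀, hD₁⟩ := hD
  have ha₀ : 1.046 * ρ + 2 * s ≤ ρ * π / 3 + 2 * s := by
    nlinarith [mul_le_mul_of_nonneg_left pi_gt_d2.le hρ₀]
  have ha₁ : ρ * π / 3 + 2 * s ≤ 1.05 * ρ + 2 * s := by
    nlinarith [mul_le_mul_of_nonneg_left pi_lt_d2.le hρ₀]
  set a := ρ * π / 3 + 2 * s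
  rcases lt_or_ge (ρ * p - (0.32 - s) * D) 0 with hneg | hnonneg
  · exact hneg.trans_le (sqrt_nonneg _)
  -- `0.4832 = 0.32 * 1.51`
  have hU : ρ * p - (0.32 - s) * D ≤ 3.7 * ρ + 1.52 * s - 0.4832 := by nlinarith
  refine (lt_sqrt hnonneg).2 ?_
  calc (ρ * p - (0.32 - s) * D) ^ 2 ≤ (3.7 * ρ + 1.52 * s - 0.4832) ^ 2 :=
        pow_le_pow_left₀ hnonneg hU 2
    _ < 12.56 * (1.046 * ρ + 2 * s) - (1.05 * ρ + 2 * s) ^ 2 := by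
        linarith [quadratic_lt_linear_on_box hρ₀ hρ₁ hs₀ hs₁ (hnonneg.trans hU)]
    _ ≤ 4 * π * a - a ^ 2 := by
        have ha : 0 ≤ a := by linarith
        nlinarith [pi_gt_d2, pow_le_pow_left₀ ha ha₁ 2]

theorem case_reflection :
    ∀ ρ ∈ Set.Icc (0 : ℝ) 1, ∀ s ∈ Set.Icc (0 : ℝ) 1.301,
      Ifun (circPerim0 (ρ * π / 3 + 2 * s)) 5 (0.32 - s) ρ > 0 := by
  rintro ρ ⟨hρ₀, hρ₁⟩ s ⟨hs₀, hs₁⟩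
  have h := lt_circPerim0 hρ₀ hρ₁ hs₀ hs₁ p5_le neg_B'_mem_Icc
  rw [Ifun, sub_self, zero_mul]
  linarith
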